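/- Let ℓ_1 ≥ 1 be an integer, let G be a digraph on n vertices with n ≥ ℓ_1 + 2, and let s ≠ t be vertices of G. Let G' be the digraph obtained from G by deleting all arcs with head s, all arcs with tail t, and every arc from s to t, and then adding an (s,t)-path with exactly ℓ_1 arcs whose ℓ_1 − 1 internal vertices are new (when ℓ_1 = 1 this means adding the single arc (s,t)). Then G has a Hamiltonian (s,t)-path if and only if G' contains a subdivision of a (ℓ_1, n−1)-spindle. -/

import Mathlib

/-!
A Hamiltonian `(s,t)`-path of `G` never enters `s`, never leaves `t` and, as `n ≥ 3`, does not
use the arc `st`, so it survives in `G'`; together with the added path, which is shorter, it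
forms the spindle.

Conversely, every new vertex has a unique in- and out-neighbour in `G'`, so a path through a
new vertex lies on the added path and has at most `ℓ₁ + 1 < n` vertices. Hence the long path of
a spindle, having at least `n` vertices, consists of all the old vertices; since `s` has no
in-arcs and `t` no out-arcs in `G'`, it runs from `s` to `t`, so it is a Hamiltonian path of `G`.
-/

/-- `p` is a directed path: a nonempty list of pairwise distinct vertices in which
consecutive vertices are joined by arcs of the digraph with arc relation `A`. -/
def IsPath {V : Type*} (A : V → V → Prop) (p : List V) : Prop :=
  p ≠ [] ∧ p.Nodup ∧ p.Chain' A

/-- `p` is a directed `(u,v)`-path. -/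
def IsPathFT {V : Type*} (A : V → V → Prop) (u v : V) (p : List V) : Prop :=
  IsPath A p ∧ p.head? = some u ∧ p.getLast? = some v

/-- The digraph with arc relation `A` contains a subdivision of an `(l1,l2)`-spindle:
two internally vertex-disjoint `(u,v)`-paths of lengths (numbers of arcs) at least
`l1` and at least `l2`, respectively. -/
def ContainsSpindle2 {V : Type*} (A : V → V → Prop) (l1 l2 : ℕ) : Prop :=
  ∃ u v p1 p2, IsPathFT A u v p1 ∧ IsPathFT A u v p2 ∧
    l1 + 1 ≤ p1.length ∧ l2 + 1 ≤ p2.length ∧ p1 ≠ p2 ∧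
    ∀ x, x ∈ p1 → x ∈ p2 → x = u ∨ x = v

/-- The digraph `G'` obtained from `G` (arc relation `A`) by deleting all arcs with
head `s`, all arcs with tail `t` and every arc from `s` to `t`, and adding an
`(s,t)`-path with exactly `l1` arcs whose `l1 - 1` internal vertices are the new
vertices `Sum.inr j`, `j : Fin (l1 - 1)` (for `l1 = 1` this is just the arc `(s,t)`).
Original vertices are `Sum.inl v`. -/
def adjAddPath {V : Type*} (A : V → V → Prop) (s t : V) (l1 : ℕ) :
    V ⊕ Fin (l1 - 1) → V ⊕ Fin (l1 - 1) → Prop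
  | .inl a, .inl b =>
      (A a b ∧ b ≠ s ∧ a ≠ t ∧ ¬(a = s ∧ b = t)) ∨ (l1 = 1 ∧ a = s ∧ b = t)
  | .inl a, .inr j => a = s ∧ (j : ℕ) = 0
  | .inr j, .inl b => b = t ∧ (j : ℕ) + 2 = l1
  | .inr j, .inr j' => (j : ℕ) + 1 = (j' : ℕ)

namespace List

variable {α : Type*} {R : α → α → Prop} {l : List α}

theorem IsChain.index_le_of_unique_pred {f : ℕ → α} {m : ℕ} (hl : l.IsChain R)
    (h0 : ∀ y, ¬ R y (f 0)) (hpred : ∀ k < m, ∀ y, R y (f (k + 1)) → y = f k)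
    {i : ℕ} (hi : i < l.length) (hfi : l[i] = f m) : i ≤ m := by
  induction m generalizing i with
  | zero =>
    rcases i with _ | i
    · rfl
    · exact absurd (hfi ▸ hl.getElem i hi) (h0 _)
  | succ m ih =>
    rcases i with _ | i
    · omega
    · have hprev := hpred m (by omega) _ (hfi ▸ hl.getElem i hi)
      have := ih (fun k hk => hpred k (by omega)) (by omega) hprev
      omega

theorem IsChain.length_sub_index_le_of_unique_succ {f : ℕ → α} {m : ℕ} (hl : l.IsChain R)
    (h0 : ∀ y, ¬ R (f 0) y) (hsucc : ∀ k < m, ∀ y, R (f (k + 1)) y → y = f k)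
    {i : ℕ} (hi : i < l.length) (hfi : l[i] = f m) : l.length - 1 - i ≤ m := by
  refine (isChain_reverse.mpr hl).index_le_of_unique_pred h0 hsucc
    (i := l.length - 1 - i) (by rw [length_reverse]; omega) ?_
  rw [getElem_reverse, ← hfi]
  congr 1
  omega

theorem IsChain.head?_eq_of_not_rel (hl : l.IsChain R) {x : α} (hx : x ∈ l)
    (h : ∀ y, ¬ R y x) : l.head? = some x := by
  obtain ⟨i, hi, rfl⟩ := getElem_of_mem hx
  obtain rfl : i = 0 :=
    Nat.le_zero.mp (hl.index_le_of_unique_pred (f := fun _ => l[i]) h (by simp) hi rfl)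
  simp [head?_eq_getElem?]

theorem IsChain.getLast?_eq_of_not_rel (hl : l.IsChain R) {x : α} (hx : x ∈ l)
    (h : ∀ y, ¬ R x y) : l.getLast? = some x := by
  obtain ⟨i, hi, rfl⟩ := getElem_of_mem hx
  have := hl.length_sub_index_le_of_unique_succ (f := fun _ => l[i]) (m := 0) h (by simp) hi rfl
  obtain rfl : i = l.length - 1 := by omega
  simp [getLast?_eq_getElem?]

theorem IsChain.and_ne_endpoints (hl : l.IsChain R) (hnd : l.Nodup) {s t : α}
    (hs : l.head? = some s) (ht : l.getLast? = some t) (hlen : 2 < l.length) :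
    l.IsChain fun a b => R a b ∧ b ≠ s ∧ a ≠ t ∧ ¬(a = s ∧ b = t) := by
  obtain ⟨_, rfl⟩ := getElem?_eq_some_iff.mp (head?_eq_getElem? ▸ hs)
  obtain ⟨_, rfl⟩ := getElem?_eq_some_iff.mp (getLast?_eq_getElem? ▸ ht)
  refine isChain_iff_getElem.mpr fun i hi => ⟨hl.getElem i hi, ?_, ?_, ?_⟩
  · rw [Ne, hnd.getElem_inj_iff]; omega
  · rw [Ne, hnd.getElem_inj_iff]; omega
  · rw [hnd.getElem_inj_iff, hnd.getElem_inj_iff]; omega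

theorem exists_eq_map_inl {β : Type*} (l : List (α ⊕ β)) (h : ∀ b, Sum.inr b ∉ l) :
    ∃ q : List α, l = q.map Sum.inl := by
  induction l with
  | nil => exact ⟨[], rfl⟩
  | cons x l ih =>
    obtain ⟨q, rfl⟩ := ih fun b hb => h b (mem_cons_of_mem _ hb)
    rcases x with a | b
    · exact ⟨a :: q, rfl⟩
    · exact absurd mem_cons_self (h b)

theorem Nodup.length_eq_card_of_forall_mem [Fintype α] (hnd : l.Nodup) (h : ∀ x, x ∈ l) :
    l.length = Fintype.card α := by
  classical
  rw [← toFinset_card_of_nodup hnd, Finset.eq_univ_of_forall fun x => mem_toFinset.mpr (h x),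
    Finset.card_univ]

theorem Nodup.mem_of_card_le_length [Fintype α] (hnd : l.Nodup)
    (h : Fintype.card α ≤ l.length) (x : α) : x ∈ l := by
  classical
  have huniv : l.toFinset = Finset.univ :=
    Finset.eq_univ_of_card _ ((toFinset_card_of_nodup hnd).trans (hnd.length_le_card.antisymm h))
  exact mem_toFinset.mp (huniv ▸ Finset.mem_univ x)

end List

section AddedPath

variable {V : Type*} {A : V → V → Prop} {s t : V} {l1 k : ℕ}

variable (s t l1) in
def addedPathVertex (k : ℕ) : V ⊕ Fin (l1 - 1) :=
  if _ : k = 0 then .inl s else if _ : k < l1 then .inr ⟨k - 1, by omega⟩ else .inl t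

variable (s t l1) in
def addedPath : List (V ⊕ Fin (l1 - 1)) :=
  (List.range (l1 + 1)).map (addedPathVertex s t l1)

theorem addedPathVertex_succ (hk : k + 1 < l1) :
    addedPathVertex s t l1 (k + 1) = .inr ⟨k, by omega⟩ := by
  simp [addedPathVertex, hk]

theorem addedPathVertex_self (hl1 : 1 ≤ l1) : addedPathVertex s t l1 l1 = .inl t := by
  simp [addedPathVertex, show l1 ≠ 0 by omega]

theorem adjAddPath_addedPathVertex (hk : k < l1) :
    adjAddPath A s t l1 (addedPathVertex s t l1 k) (addedPathVertex s t l1 (k + 1)) := by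
  unfold addedPathVertex
  split_ifs <;> simp_all [adjAddPath] <;> omega

theorem not_adjAddPath_inl_source (hst : s ≠ t) (y : V ⊕ Fin (l1 - 1)) :
    ¬ adjAddPath A s t l1 y (.inl s) := by
  rcases y with a | j <;> simp [adjAddPath, hst]

theorem not_adjAddPath_inl_target (hst : s ≠ t) (y : V ⊕ Fin (l1 - 1)) :
    ¬ adjAddPath A s t l1 (.inl t) y := by
  rcases y with b | j <;> simp [adjAddPath, hst.symm]

theorem eq_addedPathVertex_of_adjAddPath_inr {y : V ⊕ Fin (l1 - 1)} {j : Fin (l1 - 1)}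
    (h : adjAddPath A s t l1 y (.inr j)) : y = addedPathVertex s t l1 j := by
  have := j.isLt
  rcases y with a | i <;> simp only [adjAddPath] at h
  · simp [addedPathVertex, h]
  · rw [← h, addedPathVertex_succ (by omega)]

theorem eq_addedPathVertex_of_inr_adjAddPath {y : V ⊕ Fin (l1 - 1)} {j : Fin (l1 - 1)}
    (h : adjAddPath A s t l1 (.inr j) y) : y = addedPathVertex s t l1 (j + 2) := by
  have := j.isLt
  rcases y with b | i <;> simp only [adjAddPath] at h
  · rw [h.1, h.2, addedPathVertex_self (by omega)]
  · have := i.isLt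
    rw [addedPathVertex_succ (by omega)]
    exact congrArg _ (Fin.ext h.symm)

theorem length_addedPath : (addedPath s t l1).length = l1 + 1 := by
  simp [addedPath]

theorem isPathFT_addedPath (hl1 : 1 ≤ l1) (hst : s ≠ t) :
    IsPathFT (adjAddPath A s t l1) (.inl s) (.inl t) (addedPath s t l1) := by
  refine ⟨⟨by simp [addedPath], ?_, ?_⟩, ?_, ?_⟩
  · refine List.nodup_range.map_on fun i hi j hj h => ?_
    simp only [List.mem_range] at hi hj
    unfold addedPathVertex at h
    split_ifs at h <;> simp_all <;> omega
  · exact (List.isChain_map _).2 <|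
      (List.isChain_range_succ _ _).2 fun k hk => adjAddPath_addedPathVertex hk
  · simp [addedPath, List.range_succ_eq_map, addedPathVertex]
  · simp [addedPath, List.getLast?_range, addedPathVertex_self hl1]

theorem eq_or_eq_of_inl_mem_addedPath {a : V} (ha : .inl a ∈ addedPath s t l1) :
    a = s ∨ a = t := by
  obtain ⟨k, -, hk⟩ := List.mem_map.mp ha
  unfold addedPathVertex at hk
  split_ifs at hk <;> simp_all

theorem IsPath.length_le_of_inr_mem (hst : s ≠ t) {p : List (V ⊕ Fin (l1 - 1))}
    (hp : IsPath (adjAddPath A s t l1) p) {j : Fin (l1 - 1)} (hj : .inr j ∈ p) :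
    p.length ≤ l1 + 1 := by
  obtain ⟨-, -, hch⟩ := hp
  obtain ⟨i, hi, hpi⟩ := List.getElem_of_mem hj
  have := j.isLt
  have hbefore : i ≤ j + 1 :=
    List.IsChain.index_le_of_unique_pred hch (f := addedPathVertex s t l1)
      (not_adjAddPath_inl_source hst) (fun k hk y hy => by
        rw [addedPathVertex_succ (by omega)] at hy
        exact eq_addedPathVertex_of_adjAddPath_inr hy)
      hi (by rw [hpi, addedPathVertex_succ (by omega)])
  -- read backwards from `t`, the added path has the same forcing property
  have hafter : p.length - 1 - i ≤ l1 - (j + 1) :=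
    List.IsChain.length_sub_index_le_of_unique_succ hch
      (f := fun k => addedPathVertex s t l1 (l1 - k))
      (by simpa [addedPathVertex_self (by omega : 1 ≤ l1)] using not_adjAddPath_inl_target hst)
      (fun k hk y hy => by
        rw [show l1 - (k + 1) = (l1 - k - 2) + 1 by omega, addedPathVertex_succ (by omega)] at hy
        rw [eq_addedPathVertex_of_inr_adjAddPath hy]
        congr 1
        dsimp only
        omega)
      hi (by rw [hpi, show l1 - (l1 - (j + 1)) = j + 1 by omega, addedPathVertex_succ (by omega)])
  omega

end AddedPath

section Spindle

variable {V : Type*} [Fintype V] {A : V → V → Prop} {s t : V} {l1 : ℕ}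

theorem containsSpindle2_adjAddPath_of_hamiltonian (hl1 : 1 ≤ l1)
    (hcard : l1 + 2 ≤ Fintype.card V) (hst : s ≠ t) {p : List V} (hp : IsPathFT A s t p)
    (hall : ∀ x, x ∈ p) :
    ContainsSpindle2 (adjAddPath A s t l1) l1 (Fintype.card V - 1) := by
  obtain ⟨⟨hne, hnd, hch⟩, hs, ht⟩ := hp
  have hlen := hnd.length_eq_card_of_forall_mem hall
  have hch' : (p.map Sum.inl).IsChain (adjAddPath A s t l1) :=
    (List.isChain_map _).2 <|
      (List.IsChain.and_ne_endpoints hch hnd hs ht (by omega)).imp fun _ _ h => Or.inl h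
  refine ⟨.inl s, .inl t, addedPath s t l1, p.map .inl, isPathFT_addedPath hl1 hst,
    ⟨⟨by simpa, hnd.map Sum.inl_injective, hch'⟩, by simp [hs], by simp [ht]⟩,
    by simp [length_addedPath], by rw [List.length_map]; omega, fun h => ?_, fun x hx hxp => ?_⟩
  · have := congrArg List.length h
    simp only [length_addedPath, List.length_map] at this
    omega
  · obtain ⟨a, -, rfl⟩ := List.mem_map.mp hxp
    simpa using eq_or_eq_of_inl_mem_addedPath hx

theorem exists_hamiltonian_of_isPath_adjAddPath (hl1 : 1 ≤ l1)
    (hcard : l1 + 2 ≤ Fintype.card V) (hst : s ≠ t) {p : List (V ⊕ Fin (l1 - 1))}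
    (hp : IsPath (adjAddPath A s t l1) p) (hlen : Fintype.card V ≤ p.length) :
    ∃ q : List V, IsPathFT A s t q ∧ ∀ x, x ∈ q := by
  obtain ⟨q, rfl⟩ := List.exists_eq_map_inl p fun j hj => by
    have := hp.length_le_of_inr_mem hst hj
    omega
  obtain ⟨-, hnd, hch⟩ := hp
  replace hnd := hnd.of_map
  replace hch : q.IsChain fun a b => adjAddPath A s t l1 (.inl a) (.inl b) :=
    (List.isChain_map _).1 hch
  rw [List.length_map] at hlen
  have hall := hnd.mem_of_card_le_length hlen
  have hs := hch.head?_eq_of_not_rel (hall s) fun a => not_adjAddPath_inl_source hst (.inl a)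
  have ht := hch.getLast?_eq_of_not_rel (hall t) fun b => not_adjAddPath_inl_target hst (.inl b)
  refine ⟨q, ⟨⟨fun h => by simp [h] at hs, hnd, ?_⟩, hs, ht⟩, hall⟩
  exact (hch.and_ne_endpoints hnd hs ht (by omega)).imp
    fun _ _ ⟨h, _, _, hnst⟩ => (h.resolve_right fun h' => hnst h'.2).1

end Spindle

theorem stmt13_general {V : Type*} [Fintype V] (A : V → V → Prop)
    (l1 : ℕ) (hl1 : 1 ≤ l1) (hcard : l1 + 2 ≤ Fintype.card V)
    (s t : V) (hst : s ≠ t) :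
    (∃ p : List V, IsPathFT A s t p ∧ ∀ x : V, x ∈ p) ↔
    ContainsSpindle2 (adjAddPath A s t l1) l1 (Fintype.card V - 1) := by
  constructor
  · rintro ⟨p, hp, hall⟩
    exact containsSpindle2_adjAddPath_of_hamiltonian hl1 hcard hst hp hall
  · rintro ⟨-, -, -, p, -, ⟨hp, -, -⟩, -, hlen, -, -⟩
    exact exists_hamiltonian_of_isPath_adjAddPath hl1 hcard hst hp (by omega)

theorem stmt13 {V : Type*} [Fintype V] (A : V → V → Prop)
    (harc : ∀ a b, A a b → a ≠ b)
    (l1 : ℕ) (hl1 : 1 ≤ l1) (hcard : l1 + 2 ≤ Fintype.card V)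
    (s t : V) (hst : s ≠ t) :
    (∃ p : List V, IsPathFT A s t p ∧ ∀ x : V, x ∈ p) ↔
    ContainsSpindle2 (adjAddPath A s t l1) l1 (Fintype.card V - 1) :=
  stmt13_general A l1 hl1 hcard s t hst
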